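/- Let R ≤ O(1) and let {ζ_1ζ_1ᵀ,…,ζ_nζ_nᵀ} be an (ε, δ, r, 𝒮_R, 𝒫_R)-stable set with respect to Id_d and 2·Id_{d²}, for some ε ≤ δ and r ≤ O(1). Then for every matrix A ∈ ℝ^{d×d} with ‖A‖² ≤ R, the set {(Aζ_1)(Aζ_1)ᵀ,…,(Aζ_n)(Aζ_n)ᵀ} is (ε, δ', r', 𝒮_1, 𝒫_1)-stable with respect to M = AAᵀ and Q = 2·Id_{d²}, where r' ≤ O(1) and δ' = O(δ + √(ε·‖AAᵀ − Id_d‖)). -/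

import Mathlib

/-!
Everything is pulled back along `Aᵀ`. For a test matrix `uuᵀ` and a pseudo-expectation `Ẽ` under
`‖v‖² ≤ 1`, one has `⟨uuᵀ, AζζᵀAᵀ - AAᵀ⟩ = ⟨(Aᵀu)(Aᵀu)ᵀ, ζζᵀ - I⟩`, and the fourth moments of
`AζζᵀAᵀ - AAᵀ` under `Ẽ` are those of `ζζᵀ - I` under `p ↦ Ẽ[p(Aᵀv)]`, a pseudo-expectation under
`‖v‖² ≤ R` because `AAᵀ ≤ R`. So the first two stability conditions transfer from `𝒮_R, 𝒫_R`,
except that the reference value `⟨P, 2 Id⟩ = 2 Ẽ‖v‖⁴` becomes `2 Ẽ‖Aᵀv‖⁴`. Their difference is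
`2 Ẽ[(vᵀ(AAᵀ - I)v)(vᵀ(AAᵀ + I)v)]`, which the degree-4 SoS Cauchy–Schwarz inequality bounds by
`4 ‖AAᵀ - I‖`; this is absorbed into `δ'²/ε` for `δ' = 2 (δ + √(ε ‖AAᵀ - I‖))`.
-/

open MeasureTheory ProbabilityTheory Matrix Finset Real Filter

noncomputable section

namespace Paper

variable {d n : ℕ}

/-- Spectral (operator) norm of a matrix. -/
def specNorm (A : Matrix (Fin d) (Fin d) ℝ) : ℝ :=
  ‖LinearMap.toContinuousLinearMap (Matrix.toEuclideanLin A)‖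

/-- Frobenius norm of a matrix. -/
def frobNorm (A : Matrix (Fin d) (Fin d) ℝ) : ℝ :=
  Real.sqrt (∑ i, ∑ j, (A i j) ^ 2)

/-- Effective rank. -/
def erk (A : Matrix (Fin d) (Fin d) ℝ) : ℝ := A.trace / specNorm A

open Classical in
/-- Positive semidefinite square root (junk value `0` if not psd). -/
def matSqrt (A : Matrix (Fin d) (Fin d) ℝ) : Matrix (Fin d) (Fin d) ℝ :=
  if h : A.PosSemidef then
    (h.1.eigenvectorUnitary : Matrix (Fin d) (Fin d) ℝ) *
      Matrix.diagonal ((↑) ∘ (fun x : ℝ => √x) ∘ h.1.eigenvalues) *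
      (star h.1.eigenvectorUnitary : Matrix (Fin d) (Fin d) ℝ)
  else 0

/-- Inverse of the positive semidefinite square root. -/
def invSqrt (A : Matrix (Fin d) (Fin d) ℝ) : Matrix (Fin d) (Fin d) ℝ := (matSqrt A)⁻¹

/-- Standard Gaussian measure on ℝ^d. -/
def stdGaussian (d : ℕ) : Measure (Fin d → ℝ) :=
  Measure.pi fun _ => gaussianReal 0 1

/-- Centered Gaussian measure with covariance S. -/
def gaussianOf (S : Matrix (Fin d) (Fin d) ℝ) : Measure (Fin d → ℝ) :=
  (stdGaussian d).map (matSqrt S).mulVec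

/-- Spatial sign (projection on the sphere of radius √d). -/
def spSign (d : ℕ) (x : Fin d → ℝ) : Fin d → ℝ :=
  fun i => Real.sqrt d * x i / Real.sqrt (∑ j, (x j) ^ 2)

/-- Truncated spatial sign with threshold Δ. -/
def truncSign (d : ℕ) (Δ : ℝ) (x : Fin d → ℝ) : Fin d → ℝ :=
  if (∑ i, (x i) ^ 2) < (d : ℝ) - Δ then fun i => Real.sqrt ((d : ℝ) / ((d : ℝ) - Δ)) * x i
  else if (d : ℝ) + Δ < (∑ i, (x i) ^ 2) then fun i => Real.sqrt ((d : ℝ) / ((d : ℝ) + Δ)) * x i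
  else spSign d x

/-- Mean vector of a measure on ℝ^d. -/
def meanVec (μ : Measure (Fin d → ℝ)) : Fin d → ℝ := fun i => ∫ x, x i ∂μ

/-- Covariance matrix of a measure on ℝ^d. -/
def covMatrix (μ : Measure (Fin d → ℝ)) : Matrix (Fin d) (Fin d) ℝ :=
  Matrix.of fun i j => ∫ x, (x i - meanVec μ i) * (x j - meanVec μ j) ∂μ

/-- Inner product of vectors indexed by `ι`. -/
def inner1 {ι : Type*} [Fintype ι] (v x : ι → ℝ) : ℝ := ∑ j, v j * x j

/-- Inner product of "matrices" indexed by `ι × ι`. -/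
def innerM {ι : Type*} [Fintype ι] (P Q : ι → ι → ℝ) : ℝ := ∑ j, ∑ k, P j k * Q j k

/-- Outer product. -/
def outer {ι : Type*} (x y : ι → ℝ) : ι → ι → ℝ := fun j k => x j * y k

/-- sup_{v ∈ V} ⟨v, a⟩². -/
def supInner {ι : Type*} [Fintype ι] (V : Set (ι → ℝ)) (a : ι → ℝ) : ℝ :=
  sSup ((fun v => (inner1 v a) ^ 2) '' V)

/-- Generalized stability (Definition 4 of the paper). -/
def IsStable {ι : Type*} [Fintype ι] (x : Fin n → ι → ℝ) (ε δ r : ℝ)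
    (V : Set (ι → ℝ)) (P : Set (ι → ι → ℝ)) (μ : ι → ℝ) (Q : ι → ι → ℝ) : Prop :=
  ∀ v ∈ V, ∀ p ∈ P, ∀ M : Finset (Fin n), (1 - ε) * (n : ℝ) ≤ (M.card : ℝ) →
    |(M.card : ℝ)⁻¹ * ∑ i ∈ M, inner1 v (fun j => x i j - μ j)| ≤ δ ∧
    |(M.card : ℝ)⁻¹ * ∑ i ∈ M, innerM p (outer (fun j => x i j - μ j) (fun j => x i j - μ j))
        - innerM p Q| ≤ δ ^ 2 / ε ∧
    |innerM p Q| ≤ r ^ 2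

/-- 𝒱 ⊗ 𝒱 ⊆ 𝒫. -/
def TensorSub {ι : Type*} (V : Set (ι → ℝ)) (P : Set (ι → ι → ℝ)) : Prop :=
  ∀ v ∈ V, ∀ v' ∈ V, outer v v' ∈ P

/-- Adequacy of 𝒫 with respect to 𝒱. -/
def Adequate {ι : Type*} [Fintype ι] (V : Set (ι → ℝ)) (P : Set (ι → ι → ℝ)) : Prop :=
  (∀ a : ι → ℝ, ∀ p ∈ P, 0 ≤ innerM p (outer a a)) ∧
  (∀ a b : ι → ℝ, ∀ p ∈ P, (innerM p (outer a b)) ^ 2 ≤ supInner V a * supInner V b)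

/-- The weight set 𝒲_ε. -/
def weightSet (n : ℕ) (ε : ℝ) : Set (Fin n → ℝ) :=
  {w | (∀ i, 0 ≤ w i ∧ w i ≤ 1 / (n : ℝ)) ∧ 1 - ε ≤ ∑ i, w i}

/-- Weighted mean μ_w. -/
def wMean {ι : Type*} (w : Fin n → ℝ) (x : Fin n → ι → ℝ) : ι → ℝ :=
  fun j => (∑ i, w i)⁻¹ * ∑ i, w i * x i j

/-- Weighted covariance Σ_w. -/
def wCov {ι : Type*} (w : Fin n → ℝ) (x : Fin n → ι → ℝ) : ι → ι → ℝ :=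
  fun j k => (∑ i, w i)⁻¹ * ∑ i, w i * (x i j - wMean w x j) * (x i k - wMean w x k)

/-- A d×d matrix viewed as a vector in ℝ^{d²}. -/
def mvec (A : Matrix (Fin d) (Fin d) ℝ) : Fin d × Fin d → ℝ := fun p => A p.1 p.2

/-- Id_d as a vector in ℝ^{d²}. -/
def idVec (d : ℕ) : Fin d × Fin d → ℝ := fun p => if p.1 = p.2 then 1 else 0

/-- 2·Id_{d²}. -/
def twoId (d : ℕ) : (Fin d × Fin d) → (Fin d × Fin d) → ℝ :=
  fun p q => if p = q then 2 else 0

/-- The Frobenius-norm ball ℬ_R (as vectors in ℝ^{d²}). -/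
def ballF (d : ℕ) (R : ℝ) : Set (Fin d × Fin d → ℝ) :=
  {V | ∑ p : Fin d × Fin d, (V p) ^ 2 ≤ R ^ 2}

/-- ℬ_R ⊗ ℬ_R. -/
def ballFT (d : ℕ) (R : ℝ) : Set ((Fin d × Fin d) → (Fin d × Fin d) → ℝ) :=
  {P | ∃ V ∈ ballF d R, ∃ W ∈ ballF d R, P = outer V W}

/-- 𝒮_R = {uuᵀ : ‖u‖ ≤ √R}. -/
def sphereSet (d : ℕ) (R : ℝ) : Set (Fin d × Fin d → ℝ) :=
  {V | ∃ u : Fin d → ℝ, (∑ i, (u i) ^ 2) ≤ R ∧ V = fun p => u p.1 * u p.2}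

/-- 𝒫_R: the set of degree-4 pseudo-expectation moment matrices Ẽ[v^{⊗4}]
under the constraint ‖v‖² ≤ R. -/
def pseudoSet (d : ℕ) (R : ℝ) : Set ((Fin d × Fin d) → (Fin d × Fin d) → ℝ) :=
  {P | ∃ L : MvPolynomial (Fin d) ℝ →ₗ[ℝ] ℝ,
    L 1 = 1 ∧
    (∀ q : MvPolynomial (Fin d) ℝ, q.totalDegree ≤ 2 → 0 ≤ L (q ^ 2)) ∧
    (∀ q : MvPolynomial (Fin d) ℝ, q.totalDegree ≤ 1 →
      0 ≤ L ((MvPolynomial.C R - ∑ i, MvPolynomial.X i ^ 2) * q ^ 2)) ∧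
    P = fun p q => L (MvPolynomial.X p.1 * MvPolynomial.X p.2 *
        MvPolynomial.X q.1 * MvPolynomial.X q.2)}

/-- The Hanson–Wright property of a distribution ρ with mean μv and covariance S. -/
def HansonWright (ρ : Measure (Fin d → ℝ)) (μv : Fin d → ℝ)
    (S : Matrix (Fin d) (Fin d) ℝ) (CHW : ℝ) : Prop :=
  ∀ A : Matrix (Fin d) (Fin d) ℝ, ∀ t : ℝ, 0 < t →
    ρ {x | t ≤ |(∑ j, ∑ k, ((invSqrt S).mulVec (fun l => x l - μv l)) j * A j k *
        ((invSqrt S).mulVec (fun l => x l - μv l)) k) - A.trace|}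
      ≤ ENNReal.ofReal (2 * Real.exp (-(1 / CHW) *
          min (t ^ 2 / (frobNorm A) ^ 2) (t / specNorm A)))

/-- ε-corruption of an indexed family of points. -/
def Corruption {α : Type*} (n : ℕ) (ε : ℝ) (x y : Fin n → α) : Prop :=
  ∃ G : Finset (Fin n), (1 - ε) * (n : ℝ) ≤ (G.card : ℝ) ∧ ∀ i ∈ G, x i = y i

/-- Entries of the 4-tensor E[(xxᵀ − Id)^{⊗2}] of a measure μ on ℝ^d. -/
def tensorEnt (μ : Measure (Fin d → ℝ)) (i1 i2 i3 i4 : Fin d) : ℝ :=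
  ∫ x, (x i1 * x i2 - if i1 = i2 then (1 : ℝ) else 0) *
       (x i3 * x i4 - if i3 = i4 then (1 : ℝ) else 0) ∂μ

/-- E[(xxᵀ − Id)^{⊗2}] as a d²×d² matrix. -/
def tensorQ (μ : Measure (Fin d → ℝ)) : (Fin d × Fin d) → (Fin d × Fin d) → ℝ :=
  fun p q => tensorEnt μ p.1 p.2 q.1 q.2


section OperatorNorm

open scoped Matrix.Norms.L2Operator

variable {ι : Type*} [Fintype ι] [DecidableEq ι]

lemma specNorm_eq_l2_opNorm (A : Matrix (Fin d) (Fin d) ℝ) : specNorm A = ‖A‖ := rfl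

lemma dotProduct_mulVec_le_l2_opNorm (D : Matrix ι ι ℝ) (x : ι → ℝ) :
    x ⬝ᵥ D *ᵥ x ≤ ‖D‖ * (x ⬝ᵥ x) := by
  set y := WithLp.toLp 2 x
  have hy : ‖y‖ ^ 2 = x ⬝ᵥ x := by
    rw [← real_inner_self_eq_norm_sq, EuclideanSpace.inner_eq_star_dotProduct]; simp [y]
  calc x ⬝ᵥ D *ᵥ x = inner ℝ y (toEuclideanCLM (𝕜 := ℝ) D y) := by
        rw [inner_toEuclideanCLM]
    _ ≤ ‖y‖ * ‖toEuclideanCLM (𝕜 := ℝ) D y‖ := real_inner_le_norm _ _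
    _ ≤ ‖y‖ * (‖D‖ * ‖y‖) := by gcongr; exact (toEuclideanCLM (𝕜 := ℝ) D).le_opNorm y
    _ = ‖D‖ * (x ⬝ᵥ x) := by rw [← hy]; ring

lemma posSemidef_smul_one_sub_of_l2_opNorm_le {D : Matrix ι ι ℝ} (hD : D.IsHermitian) {s : ℝ}
    (hs : ‖D‖ ≤ s) : (s • 1 - D).PosSemidef := by
  refine .of_dotProduct_mulVec_nonneg ((isHermitian_one.smul (IsSelfAdjoint.all s)).sub hD)
    fun x => ?_
  have hxD := dotProduct_mulVec_le_l2_opNorm D x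
  have hxx : 0 ≤ x ⬝ᵥ x := by simpa using dotProduct_self_star_nonneg x
  simp only [star_trivial, sub_mulVec, smul_mulVec, one_mulVec, dotProduct_sub, dotProduct_smul,
    smul_eq_mul]
  nlinarith

lemma posSemidef_smul_one_add_of_l2_opNorm_le {D : Matrix ι ι ℝ} (hD : D.IsHermitian) {s : ℝ}
    (hs : ‖D‖ ≤ s) : (s • 1 + D).PosSemidef := by
  simpa using posSemidef_smul_one_sub_of_l2_opNorm_le hD.neg (s := s) (by rwa [norm_neg])

lemma l2_opNorm_one_le : ‖(1 : Matrix ι ι ℝ)‖ ≤ 1 := by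
  rw [← l2_opNorm_toEuclideanCLM, map_one]
  exact ContinuousLinearMap.norm_id_le

lemma l2_opNorm_mul_transpose_self (A : Matrix ι ι ℝ) : ‖A * Aᵀ‖ = ‖A‖ ^ 2 := by
  simpa [sq, star_eq_conjTranspose] using CStarRing.norm_self_mul_star (x := A)

end OperatorNorm

section Polynomials

open MvPolynomial

lemma totalDegree_aeval_le {σ τ R : Type*} [CommSemiring R] {f : σ → MvPolynomial τ R}
    (hf : ∀ i, (f i).totalDegree ≤ 1) (p : MvPolynomial σ R) :
    (aeval f p).totalDegree ≤ p.totalDegree := by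
  classical
  conv_lhs => rw [p.as_sum, map_sum]
  refine totalDegree_finsetSum_le fun m hm => ?_
  rw [aeval_monomial, Finsupp.prod]
  refine (totalDegree_mul _ _).trans ?_
  rw [algebraMap_eq, totalDegree_C, zero_add]
  refine (totalDegree_finsetProd _ _).trans (le_trans ?_ (le_totalDegree hm))
  exact Finset.sum_le_sum fun i _ =>
    (totalDegree_pow _ _).trans (mul_le_of_le_one_right (Nat.zero_le _) (hf i))

variable {ι : Type*} [Fintype ι]

def linearForms (B : Matrix ι ι ℝ) : ι → MvPolynomial ι ℝ := B.map C *ᵥ X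

def quadForm (M : Matrix ι ι ℝ) : MvPolynomial ι ℝ := X ⬝ᵥ linearForms M

def linearSubst (B : Matrix ι ι ℝ) : MvPolynomial ι ℝ →ₐ[ℝ] MvPolynomial ι ℝ :=
  aeval (linearForms B)

lemma totalDegree_linearForms_le (B : Matrix ι ι ℝ) (i : ι) :
    (linearForms B i).totalDegree ≤ 1 := by
  refine totalDegree_finsetSum_le fun j _ => (totalDegree_mul _ _).trans ?_
  simp

lemma totalDegree_quadForm_le (M : Matrix ι ι ℝ) : (quadForm M).totalDegree ≤ 2 := by
  refine totalDegree_finsetSum_le fun i _ => (totalDegree_mul _ _).trans ?_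
  have := totalDegree_linearForms_le M i
  simp only [totalDegree_X]
  omega

lemma totalDegree_linearSubst_le (B : Matrix ι ι ℝ) (p : MvPolynomial ι ℝ) :
    (linearSubst B p).totalDegree ≤ p.totalDegree :=
  totalDegree_aeval_le (totalDegree_linearForms_le B) p

lemma quadForm_eq_sum (M : Matrix ι ι ℝ) :
    quadForm M = ∑ p : ι × ι, M p.1 p.2 • (X p.1 * X p.2) := by
  simp only [quadForm, linearForms, dotProduct, mulVec, Fintype.sum_prod_type, Finset.mul_sum,
    map_apply, smul_eq_C_mul]
  exact Finset.sum_congr rfl fun i _ => Finset.sum_congr rfl fun j _ => by ring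

lemma quadForm_add (M N : Matrix ι ι ℝ) : quadForm (M + N) = quadForm M + quadForm N := by
  simp only [quadForm_eq_sum, Matrix.add_apply, add_smul, Finset.sum_add_distrib]

lemma quadForm_smul (c : ℝ) (M : Matrix ι ι ℝ) : quadForm (c • M) = c • quadForm M := by
  simp only [quadForm_eq_sum, Matrix.smul_apply, smul_eq_mul, mul_smul, Finset.smul_sum]

lemma quadForm_sub (M N : Matrix ι ι ℝ) : quadForm (M - N) = quadForm M - quadForm N := by
  rw [sub_eq_add_neg, quadForm_add, ← neg_one_smul ℝ N, quadForm_smul, neg_one_smul,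
    sub_eq_add_neg]

lemma quadForm_one [DecidableEq ι] : quadForm (1 : Matrix ι ι ℝ) = ∑ i, X i ^ 2 := by
  simp [quadForm, linearForms, Matrix.map_one _ (map_zero C) (map_one C), dotProduct, sq]

lemma dotProduct_linearForms (B : Matrix ι ι ℝ) (w : ι → MvPolynomial ι ℝ) :
    linearForms B ⬝ᵥ w = X ⬝ᵥ Bᵀ.map C *ᵥ w := by
  rw [linearForms, dotProduct_comm, dotProduct_mulVec, transpose_map, mulVec_transpose,
    dotProduct_comm]

lemma quadForm_transpose_mul_self (B : Matrix ι ι ℝ) :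
    quadForm (Bᵀ * B) = ∑ i, linearForms B i ^ 2 := by
  rw [quadForm, linearForms, Matrix.map_mul, ← mulVec_mulVec, ← linearForms,
    ← dotProduct_linearForms]
  simp only [dotProduct, sq]

lemma linearSubst_comp_X (B : Matrix ι ι ℝ) : linearSubst B ∘ X = linearForms B := by
  funext j
  simp [linearSubst]

lemma linearSubst_comp_linearForms (B M : Matrix ι ι ℝ) :
    linearSubst B ∘ linearForms M = linearForms (M * B) := by
  funext i
  have hC : (M.map C).map (linearSubst B) = M.map C := by
    ext j k
    simp [linearSubst]
  have h := RingHom.map_mulVec (linearSubst B : MvPolynomial ι ℝ →+* MvPolynomial ι ℝ) (M.map C) X i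
  simp only [RingHom.coe_coe, hC, linearSubst_comp_X] at h
  rw [Function.comp_apply, linearForms, h, linearForms, mulVec_mulVec, linearForms, Matrix.map_mul]

lemma linearSubst_quadForm (B M : Matrix ι ι ℝ) :
    linearSubst B (quadForm M) = quadForm (Bᵀ * M * B) := by
  have h := RingHom.map_dotProduct (linearSubst B : MvPolynomial ι ℝ →+* MvPolynomial ι ℝ) X
    (linearForms M)
  simp only [RingHom.coe_coe, linearSubst_comp_X, linearSubst_comp_linearForms] at h
  rw [quadForm, h, dotProduct_linearForms, linearForms, mulVec_mulVec, ← Matrix.map_mul,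
    Matrix.mul_assoc, quadForm, linearForms]

end Polynomials

section Positivity

open MvPolynomial

def NonnegOnSquares {σ : Type*} (L : MvPolynomial σ ℝ →ₗ[ℝ] ℝ) : Prop :=
  ∀ q : MvPolynomial σ ℝ, q.totalDegree ≤ 2 → 0 ≤ L (q ^ 2)

lemma NonnegOnSquares.map_mul_sq_le {σ : Type*} {L : MvPolynomial σ ℝ →ₗ[ℝ] ℝ}
    (hL : NonnegOnSquares L) {f g : MvPolynomial σ ℝ} (hf : f.totalDegree ≤ 2)
    (hg : g.totalDegree ≤ 2) : L (f * g) ^ 2 ≤ L (f ^ 2) * L (g ^ 2) := by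
  have hquad (t : ℝ) : 0 ≤ L (f ^ 2) * (t * t) + 2 * L (f * g) * t + L (g ^ 2) := by
    have h := hL (t • f + g)
      ((totalDegree_add _ _).trans (max_le ((totalDegree_smul_le _ _).trans hf) hg))
    have hexp : (t • f + g) ^ 2 = (t * t) • f ^ 2 + (2 * t) • (f * g) + g ^ 2 := by
      simp only [Algebra.smul_def, map_mul, map_ofNat]
      ring
    rw [hexp, map_add, map_add, map_smul, map_smul, smul_eq_mul, smul_eq_mul] at h
    linarith
  have := discrim_le_zero hquad
  rw [discrim] at this
  nlinarith

open scoped MatrixOrder Matrix.Norms.L2Operator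

variable {ι : Type*} [Fintype ι] [DecidableEq ι]

lemma exists_quadForm_eq_sum_sq {M : Matrix ι ι ℝ} (hM : M.PosSemidef) :
    ∃ B : Matrix ι ι ℝ, quadForm M = ∑ i, linearForms B i ^ 2 := by
  obtain ⟨B, rfl⟩ := CStarAlgebra.nonneg_iff_eq_star_mul_self.mp hM.nonneg
  exact ⟨B, by simpa [star_eq_conjTranspose] using quadForm_transpose_mul_self B⟩

namespace NonnegOnSquares

variable {L : MvPolynomial ι ℝ →ₗ[ℝ] ℝ}

lemma map_quadForm_mul_sq_nonneg (hL : NonnegOnSquares L) {M : Matrix ι ι ℝ}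
    (hM : M.PosSemidef) {q : MvPolynomial ι ℝ} (hq : q.totalDegree ≤ 1) :
    0 ≤ L (quadForm M * q ^ 2) := by
  obtain ⟨B, hB⟩ := exists_quadForm_eq_sum_sq hM
  rw [hB, Finset.sum_mul, map_sum]
  refine Finset.sum_nonneg fun i _ => ?_
  rw [← mul_pow]
  have := totalDegree_linearForms_le B i
  exact hL _ ((totalDegree_mul _ _).trans (by omega))

lemma map_quadForm_mul_quadForm_nonneg (hL : NonnegOnSquares L) {M N : Matrix ι ι ℝ}
    (hM : M.PosSemidef) (hN : N.PosSemidef) : 0 ≤ L (quadForm M * quadForm N) := by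
  obtain ⟨B, hB⟩ := exists_quadForm_eq_sum_sq hN
  rw [hB, Finset.mul_sum, map_sum]
  exact Finset.sum_nonneg fun i _ =>
    hL.map_quadForm_mul_sq_nonneg hM (totalDegree_linearForms_le B i)

/-- `s²‖v‖⁴ - (vᵀ D v)² = (vᵀ (s - D) v) (vᵀ (s + D) v)` is a product of PSD forms, `s = ‖D‖`. -/
lemma map_quadForm_sq_le (hL : NonnegOnSquares L) {D : Matrix ι ι ℝ} (hD : D.IsHermitian) :
    L (quadForm D ^ 2) ≤ ‖D‖ ^ 2 * L (quadForm 1 ^ 2) := by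
  have h := hL.map_quadForm_mul_quadForm_nonneg
    (posSemidef_smul_one_sub_of_l2_opNorm_le hD le_rfl)
    (posSemidef_smul_one_add_of_l2_opNorm_le hD le_rfl)
  have hexp : quadForm (‖D‖ • 1 - D) * quadForm (‖D‖ • 1 + D) =
      (‖D‖ ^ 2) • quadForm 1 ^ 2 - quadForm D ^ 2 := by
    rw [quadForm_sub, quadForm_add, quadForm_smul]
    simp only [Algebra.smul_def, map_pow]
    ring
  rw [hexp, map_sub, map_smul, smul_eq_mul] at h
  linarith

lemma abs_map_quadForm_mul_le (hL : NonnegOnSquares L) {D G : Matrix ι ι ℝ} (hD : D.IsHermitian)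
    (hG : G.IsHermitian) :
    |L (quadForm D * quadForm G)| ≤ ‖D‖ * ‖G‖ * L (quadForm 1 ^ 2) := by
  have h1 : 0 ≤ L (quadForm 1 ^ 2) := hL _ (totalDegree_quadForm_le 1)
  refine abs_le_of_sq_le_sq ?_ (by positivity)
  calc L (quadForm D * quadForm G) ^ 2 ≤ L (quadForm D ^ 2) * L (quadForm G ^ 2) :=
        hL.map_mul_sq_le (totalDegree_quadForm_le D) (totalDegree_quadForm_le G)
    _ ≤ (‖D‖ ^ 2 * L (quadForm 1 ^ 2)) * (‖G‖ ^ 2 * L (quadForm 1 ^ 2)) :=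
        mul_le_mul (hL.map_quadForm_sq_le hD) (hL.map_quadForm_sq_le hG)
          (hL _ (totalDegree_quadForm_le G)) (by positivity)
    _ = (‖D‖ * ‖G‖ * L (quadForm 1 ^ 2)) ^ 2 := by ring

end NonnegOnSquares

end Positivity

section PseudoExpectation

open MvPolynomial

structure IsPseudoExpectation (R : ℝ) (L : MvPolynomial (Fin d) ℝ →ₗ[ℝ] ℝ) : Prop where
  map_one : L 1 = 1
  nonnegOnSquares : NonnegOnSquares L
  map_constraint_mul_sq_nonneg : ∀ q : MvPolynomial (Fin d) ℝ, q.totalDegree ≤ 1 →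
    0 ≤ L ((C R - ∑ i, X i ^ 2) * q ^ 2)

def moments (L : MvPolynomial (Fin d) ℝ →ₗ[ℝ] ℝ) : (Fin d × Fin d) → (Fin d × Fin d) → ℝ :=
  fun p q => L (X p.1 * X p.2 * X q.1 * X q.2)

lemma mem_pseudoSet {R : ℝ} {P : (Fin d × Fin d) → (Fin d × Fin d) → ℝ} :
    P ∈ pseudoSet d R ↔ ∃ L, IsPseudoExpectation R L ∧ P = moments L :=
  ⟨fun ⟨L, h1, h2, h3, hP⟩ => ⟨L, ⟨h1, h2, h3⟩, hP⟩,
    fun ⟨L, ⟨h1, h2, h3⟩, hP⟩ => ⟨L, h1, h2, h3, hP⟩⟩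

lemma innerM_moments_outer_mvec (L : MvPolynomial (Fin d) ℝ →ₗ[ℝ] ℝ)
    (B : Matrix (Fin d) (Fin d) ℝ) :
    innerM (moments L) (outer (mvec B) (mvec B)) = L (quadForm B ^ 2) := by
  rw [quadForm_eq_sum, sq, Finset.sum_mul_sum, map_sum]
  simp only [innerM, outer, mvec, moments, map_sum, smul_mul_smul, map_smul, smul_eq_mul]
  exact Finset.sum_congr rfl fun p _ => Finset.sum_congr rfl fun q _ => by ring_nf

lemma innerM_moments_twoId (L : MvPolynomial (Fin d) ℝ →ₗ[ℝ] ℝ) :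
    innerM (moments L) (twoId d) = 2 * L (quadForm 1 ^ 2) := by
  rw [quadForm_one, sq, Finset.sum_mul_sum, map_sum]
  simp only [innerM, twoId, moments, mul_ite, mul_zero, Finset.sum_ite_eq, Finset.mem_univ,
    if_true, Fintype.sum_prod_type, map_sum, Finset.mul_sum]
  exact Finset.sum_congr rfl fun i _ => Finset.sum_congr rfl fun j _ => by ring_nf

namespace IsPseudoExpectation

variable {R : ℝ} {L : MvPolynomial (Fin d) ℝ →ₗ[ℝ] ℝ}

lemma map_quadForm_one_le (hL : IsPseudoExpectation R L) : L (quadForm 1) ≤ R := by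
  have h := hL.map_constraint_mul_sq_nonneg 1 (by simp)
  rw [one_pow, mul_one, map_sub, C_eq_smul_one, map_smul, hL.map_one, smul_eq_mul, mul_one,
    ← quadForm_one] at h
  linarith

lemma map_quadForm_one_sq_le (hL : IsPseudoExpectation R L) (hR : 0 ≤ R) :
    L (quadForm 1 ^ 2) ≤ R ^ 2 := by
  have h : 0 ≤ L ((C R - quadForm 1) * quadForm 1) := by
    rw [quadForm_one, Finset.mul_sum, map_sum]
    exact Finset.sum_nonneg fun i _ =>
      hL.map_constraint_mul_sq_nonneg (X i) (totalDegree_X i).le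
  rw [sub_mul, ← smul_eq_C_mul, ← sq, map_sub, map_smul, smul_eq_mul] at h
  nlinarith [mul_le_mul_of_nonneg_left hL.map_quadForm_one_le hR]

/-- Pulling back along `v ↦ B v` turns the constraint `‖v‖² ≤ 1` into `‖v‖² ≤ R`
once `Bᵀ B ≤ R`, since `R - ‖B v‖² = R (1 - ‖v‖²) + vᵀ (R - Bᵀ B) v`. -/
lemma comp_linearSubst (hL : IsPseudoExpectation 1 L) {B : Matrix (Fin d) (Fin d) ℝ} (hR : 0 ≤ R)
    (hB : (R • 1 - Bᵀ * B).PosSemidef) :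
    IsPseudoExpectation R (L ∘ₗ (linearSubst B).toLinearMap) where
  map_one := by simp [hL.map_one]
  nonnegOnSquares q hq := by
    simpa using hL.nonnegOnSquares _ ((totalDegree_linearSubst_le B q).trans hq)
  map_constraint_mul_sq_nonneg q hq := by
    have hq' := (totalDegree_linearSubst_le B q).trans hq
    have hsplit : linearSubst B ((C R - ∑ i, X i ^ 2) * q ^ 2) =
        R • ((C 1 - ∑ i, X i ^ 2) * linearSubst B q ^ 2) +
          quadForm (R • 1 - Bᵀ * B) * linearSubst B q ^ 2 := by
      have hC : linearSubst B (C R) = C R := by simp [linearSubst]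
      rw [← quadForm_one, map_mul, map_sub, map_pow, linearSubst_quadForm, hC, quadForm_sub,
        quadForm_smul, Matrix.mul_one]
      simp only [Algebra.smul_def, algebraMap_eq, C_1]
      ring
    rw [LinearMap.comp_apply, AlgHom.toLinearMap_apply, hsplit, map_add, map_smul, smul_eq_mul]
    exact add_nonneg (mul_nonneg hR (hL.map_constraint_mul_sq_nonneg _ hq'))
      (hL.nonnegOnSquares.map_quadForm_mul_sq_nonneg hB hq')

end IsPseudoExpectation

end PseudoExpectation

section LinearTransformation

open scoped Matrix.Norms.L2Operator

lemma inner1_mvec_vecMulVec (u : Fin d → ℝ) (B : Matrix (Fin d) (Fin d) ℝ) :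
    inner1 (mvec (vecMulVec u u)) (mvec B) = u ⬝ᵥ B *ᵥ u := by
  simp only [inner1, mvec, vecMulVec_apply, dotProduct, mulVec, Fintype.sum_prod_type,
    Finset.mul_sum]
  exact Finset.sum_congr rfl fun i _ => Finset.sum_congr rfl fun j _ => by ring

variable {ι : Type*} [Fintype ι]

lemma isHermitian_mul_transpose_self (A : Matrix ι ι ℝ) : (A * Aᵀ).IsHermitian := by
  simpa using isHermitian_mul_conjTranspose_self A

lemma mul_vecMulVec_sub_one_mul_transpose [DecidableEq ι] (A : Matrix ι ι ℝ) (z : ι → ℝ) :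
    A * (vecMulVec z z - 1) * Aᵀ = vecMulVec (A *ᵥ z) (A *ᵥ z) - A * Aᵀ := by
  rw [Matrix.mul_sub, Matrix.sub_mul, Matrix.mul_one, mul_vecMulVec, vecMulVec_mul,
    vecMul_transpose]

lemma dotProduct_mul_mul_transpose_mulVec (A N : Matrix ι ι ℝ) (u : ι → ℝ) :
    u ⬝ᵥ (A * N * Aᵀ) *ᵥ u = (Aᵀ *ᵥ u) ⬝ᵥ N *ᵥ (Aᵀ *ᵥ u) := by
  rw [← mulVec_mulVec, ← mulVec_mulVec, dotProduct_mulVec, ← mulVec_transpose]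

lemma mvec_vecMulVec_transpose_mulVec_mem_sphereSet {A : Matrix (Fin d) (Fin d) ℝ} {R : ℝ}
    (hA : ‖A‖ ^ 2 ≤ R) {u : Fin d → ℝ} (hu : ∑ i, u i ^ 2 ≤ 1) :
    mvec (vecMulVec (Aᵀ *ᵥ u) (Aᵀ *ᵥ u)) ∈ sphereSet d R := by
  refine ⟨Aᵀ *ᵥ u, ?_, rfl⟩
  have h := dotProduct_mulVec_le_l2_opNorm (A * Aᵀ) u
  have hAu := dotProduct_mul_mul_transpose_mulVec A 1 u
  rw [Matrix.mul_one, one_mulVec] at hAu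
  rw [hAu, l2_opNorm_mul_transpose_self] at h
  simp only [dotProduct, ← sq] at h hu
  nlinarith [sq_nonneg ‖A‖]

lemma inner1_mvec_vecMulVec_mulVec_sub (A : Matrix (Fin d) (Fin d) ℝ) (u z : Fin d → ℝ) :
    inner1 (mvec (vecMulVec u u)) (mvec (vecMulVec (A *ᵥ z) (A *ᵥ z) - A * Aᵀ)) =
      inner1 (mvec (vecMulVec (Aᵀ *ᵥ u) (Aᵀ *ᵥ u))) (mvec (vecMulVec z z - 1)) := by
  rw [← mul_vecMulVec_sub_one_mul_transpose, inner1_mvec_vecMulVec, inner1_mvec_vecMulVec,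
    dotProduct_mul_mul_transpose_mulVec]

lemma innerM_moments_outer_mvec_vecMulVec_mulVec_sub (L : MvPolynomial (Fin d) ℝ →ₗ[ℝ] ℝ)
    (A : Matrix (Fin d) (Fin d) ℝ) (z : Fin d → ℝ) :
    innerM (moments L) (outer (mvec (vecMulVec (A *ᵥ z) (A *ᵥ z) - A * Aᵀ))
        (mvec (vecMulVec (A *ᵥ z) (A *ᵥ z) - A * Aᵀ))) =
      innerM (moments (L ∘ₗ (linearSubst Aᵀ).toLinearMap))
        (outer (mvec (vecMulVec z z - 1)) (mvec (vecMulVec z z - 1))) := by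
  rw [innerM_moments_outer_mvec, innerM_moments_outer_mvec, LinearMap.comp_apply,
    AlgHom.toLinearMap_apply, map_pow (linearSubst Aᵀ), linearSubst_quadForm, transpose_transpose,
    mul_vecMulVec_sub_one_mul_transpose]

lemma abs_innerM_moments_twoId_comp_linearSubst_sub_le {L : MvPolynomial (Fin d) ℝ →ₗ[ℝ] ℝ}
    (hL : IsPseudoExpectation 1 L) {A : Matrix (Fin d) (Fin d) ℝ} (hA : ‖A * Aᵀ‖ ≤ 1) :
    |innerM (moments (L ∘ₗ (linearSubst Aᵀ).toLinearMap)) (twoId d) -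
        innerM (moments L) (twoId d)| ≤ 4 * ‖A * Aᵀ - 1‖ := by
  have hAAt := isHermitian_mul_transpose_self A
  have hfac : quadForm (A * Aᵀ) ^ 2 - quadForm 1 ^ 2 =
      quadForm (A * Aᵀ - 1) * quadForm (A * Aᵀ + 1) := by
    rw [quadForm_sub, quadForm_add]
    ring
  rw [innerM_moments_twoId, innerM_moments_twoId, LinearMap.comp_apply,
    AlgHom.toLinearMap_apply, map_pow (linearSubst Aᵀ), linearSubst_quadForm, transpose_transpose,
    Matrix.mul_one, ← mul_sub, ← map_sub, hfac, abs_mul, abs_two]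
  have hprod := hL.nonnegOnSquares.abs_map_quadForm_mul_le (hAAt.sub isHermitian_one)
    (hAAt.add isHermitian_one)
  have hsum : ‖A * Aᵀ + 1‖ ≤ 2 :=
    (norm_add_le _ _).trans (by linarith [l2_opNorm_one_le (ι := Fin d)])
  have hmom : L (quadForm 1 ^ 2) ≤ 1 := by simpa using hL.map_quadForm_one_sq_le zero_le_one
  have hmom₀ : 0 ≤ L (quadForm 1 ^ 2) := hL.nonnegOnSquares _ (totalDegree_quadForm_le 1)
  calc 2 * |L (quadForm (A * Aᵀ - 1) * quadForm (A * Aᵀ + 1))|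
      ≤ 2 * (‖A * Aᵀ - 1‖ * ‖A * Aᵀ + 1‖ * L (quadForm 1 ^ 2)) := by gcongr
    _ ≤ 2 * (‖A * Aᵀ - 1‖ * 2 * 1) := by gcongr
    _ = 4 * ‖A * Aᵀ - 1‖ := by ring

theorem isStable_mulVec {n : ℕ} {ε δ r R : ℝ} {ζ : Fin n → Fin d → ℝ}
    {A : Matrix (Fin d) (Fin d) ℝ} (hε : 0 < ε) (hδ : 0 ≤ δ) (hR : R ≤ 1)
    (hζ : IsStable (fun i p => ζ i p.1 * ζ i p.2) ε δ r (sphereSet d R) (pseudoSet d R)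
      (idVec d) (twoId d))
    (hA : ‖A‖ ^ 2 ≤ R) :
    IsStable (fun i p => (A *ᵥ ζ i) p.1 * (A *ᵥ ζ i) p.2) ε
      (2 * (δ + √(ε * ‖A * Aᵀ - 1‖))) 2 (sphereSet d 1) (pseudoSet d 1) (mvec (A * Aᵀ))
      (twoId d) := by
  rintro _ ⟨u, hu, rfl⟩ P hP M hM
  obtain ⟨L, hL, rfl⟩ := mem_pseudoSet.mp hP
  set s := ‖A * Aᵀ - 1‖
  have hnorm : ‖A * Aᵀ‖ ≤ R := (l2_opNorm_mul_transpose_self A).trans_le hA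
  have hL' := hL.comp_linearSubst (B := Aᵀ) ((sq_nonneg _).trans hA) (by
    simpa using posSemidef_smul_one_sub_of_l2_opNorm_le (isHermitian_mul_transpose_self A) hnorm)
  obtain ⟨h1, h2, -⟩ := hζ _ (mvec_vecMulVec_transpose_mulVec_mem_sphereSet hA hu) _
    (mem_pseudoSet.mpr ⟨_, hL', rfl⟩) M hM
  refine ⟨?_, ?_, ?_⟩
  · show |(#M : ℝ)⁻¹ * ∑ i ∈ M, inner1 (mvec (vecMulVec u u))
      (mvec (vecMulVec (A *ᵥ ζ i) (A *ᵥ ζ i) - A * Aᵀ))| ≤ _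
    simp only [inner1_mvec_vecMulVec_mulVec_sub]
    exact h1.trans (by nlinarith [Real.sqrt_nonneg (ε * s)])
  · show |(#M : ℝ)⁻¹ * ∑ i ∈ M, innerM (moments L)
      (outer (mvec (vecMulVec (A *ᵥ ζ i) (A *ᵥ ζ i) - A * Aᵀ))
        (mvec (vecMulVec (A *ᵥ ζ i) (A *ᵥ ζ i) - A * Aᵀ))) - _| ≤ _
    simp only [innerM_moments_outer_mvec_vecMulVec_mulVec_sub]
    have hdiff := abs_innerM_moments_twoId_comp_linearSubst_sub_le hL (hnorm.trans hR)
    have hsqrt : √(ε * s) ^ 2 = ε * s := Real.sq_sqrt (by positivity)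
    calc _ ≤ δ ^ 2 / ε + 4 * s := (abs_sub_le _ _ _).trans (add_le_add h2 hdiff)
      _ = (δ ^ 2 + 4 * √(ε * s) ^ 2) / ε := by rw [hsqrt]; field_simp
      _ ≤ (2 * (δ + √(ε * s))) ^ 2 / ε := by
        gcongr
        nlinarith [Real.sqrt_nonneg (ε * s)]
  · have hmom₀ : 0 ≤ L (quadForm 1 ^ 2) := hL.nonnegOnSquares _ (totalDegree_quadForm_le 1)
    rw [innerM_moments_twoId, abs_of_nonneg (by positivity)]
    nlinarith [hL.map_quadForm_one_sq_le zero_le_one]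

end LinearTransformation

/-- stability is preserved under linear transformations. -/
theorem stability_under_linear_transformation :
    ∃ CR Cr C C' : ℝ, 0 < CR ∧ 0 < Cr ∧ 0 < C ∧ 0 < C' ∧
      ∀ (d n : ℕ) (ε δ r R : ℝ) (ζ : Fin n → Fin d → ℝ)
        (A : Matrix (Fin d) (Fin d) ℝ),
        0 < ε → ε ≤ δ → 0 < R → R ≤ CR → 0 < r → r ≤ Cr →
        IsStable (fun i => fun p : Fin d × Fin d => ζ i p.1 * ζ i p.2)
          ε δ r (sphereSet d R) (pseudoSet d R) (idVec d) (twoId d) →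
        specNorm A ^ 2 ≤ R →
        IsStable
          (fun i => fun p : Fin d × Fin d =>
            (A.mulVec (ζ i)) p.1 * (A.mulVec (ζ i)) p.2)
          ε (C * (δ + Real.sqrt (ε * specNorm (A * Aᵀ - 1)))) C'
          (sphereSet d 1) (pseudoSet d 1) (mvec (A * Aᵀ)) (twoId d) := by
  refine ⟨1, 1, 2, 2, one_pos, one_pos, two_pos, two_pos, ?_⟩
  intro d n ε δ r R ζ A hε hεδ _ hR _ _ hζ hA
  simp only [specNorm_eq_l2_opNorm] at hA ⊢
  exact isStable_mulVec hε (hε.le.trans hεδ) hR hζ hA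

end Paper
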